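/- arXiv:math/0309272 — 4 statements merged into one kernel-verified Lean document; each statement's English description precedes it below -/
import Mathlib

section
/- With ξ₁ = x/z, ξ₂ = x + 1/z, η = y(xz-1)/z³, if y² = xz(x+1)(z+1)(x+zt), then η² = ξ₁(ξ₁+t)(ξ₁+ξ₂+1)(ξ₂² - 4ξ₁). Equivalently, the polynomial identity ξ₁(ξ₁+t)(ξ₁+ξ₂+1)(ξ₂²-4ξ₁) · z⁶ = xz(x+1)(z+1)(x+zt) · (xz-1)² holds after substituting ξ₁ = x/z, ξ₂ = x+1/z and clearing denominators. -/
/-- The invariants satisfy the equation of V_t. -/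
theorem stmt_3 {K : Type*} [Field K] (h2 : (2 : K) ≠ 0) (t x z y : K)
    (hz : z ≠ 0)
    (h : y ^ 2 = x * z * (x + 1) * (z + 1) * (x + z * t)) :
    (y * (x * z - 1) / z ^ 3) ^ 2 =
      (x / z) * (x / z + t) * (x / z + (x + 1 / z) + 1) *
        ((x + 1 / z) ^ 2 - 4 * (x / z)) := by
  rw [div_pow, mul_pow, h]
  field_simp
  ring
end

section
/- In coordinates ξ = tα²/x, η = (ξ + tα²)/z, the genus one curve α²z(x+zt) = x(x+1)(z+1) transforms into the Weierstrass-type equation η² + (1-α²)ξη + tα²η = ξ³ + tα²ξ², i.e., if α²z(x+zt)=x(x+1)(z+1) with x,z ≠ 0, then setting ξ = tα²/x and η = (ξ+tα²)/z one has η² + (1-α²)ξη + tα²η = ξ³ + tα²ξ². -/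
/-
Clearing denominators, `ξ = tα²/x` and `η = tα²(1 + x)/(xz)` turn `x³z²` times the Weierstrass
equation into `(tα²)²(1 + x)` times the equation of the fibre, so one vanishes when the other does.
-/

theorem weierstrass_mul_eq_fibre {R : Type*} [CommRing R] {t α x z ξ η : R}
    (hξ : x * ξ = t * α ^ 2) (hη : x * z * η = t * α ^ 2 * (1 + x)) :
    x ^ 3 * z ^ 2 * (η ^ 2 + (1 - α ^ 2) * ξ * η + t * α ^ 2 * η - (ξ ^ 3 + t * α ^ 2 * ξ ^ 2))
      = (t * α ^ 2) ^ 2 * (1 + x) * (x * (x + 1) * (z + 1) - α ^ 2 * z * (x + z * t)) := by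
  linear_combination
    (x * (x * z * η + t * α ^ 2 * (1 + x)) + (1 - α ^ 2) * x * z * (x * ξ)
      + t * α ^ 2 * x ^ 2 * z) * hη
    + ((1 - α ^ 2) * x * z * (t * α ^ 2 * (1 + x))
      - z ^ 2 * ((x * ξ) ^ 2 + x * ξ * (t * α ^ 2) + (t * α ^ 2) ^ 2)
      - t * α ^ 2 * x * z ^ 2 * (x * ξ + t * α ^ 2)) * hξ

theorem stmt_4_general {K : Type*} [Field K] (t α x z : K)
    (hx : x ≠ 0) (hz : z ≠ 0)
    (h : α ^ 2 * z * (x + z * t) = x * (x + 1) * (z + 1)) :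
    (((t * α ^ 2 / x) + t * α ^ 2) / z) ^ 2
      + (1 - α ^ 2) * (t * α ^ 2 / x) * (((t * α ^ 2 / x) + t * α ^ 2) / z)
      + t * α ^ 2 * (((t * α ^ 2 / x) + t * α ^ 2) / z)
    = (t * α ^ 2 / x) ^ 3 + t * α ^ 2 * (t * α ^ 2 / x) ^ 2 := by
  set ξ := t * α ^ 2 / x
  set η := (ξ + t * α ^ 2) / z
  have hξ : x * ξ = t * α ^ 2 := mul_div_cancel₀ _ hx
  have hη : x * z * η = t * α ^ 2 * (1 + x) := by
    rw [mul_assoc, mul_div_cancel₀ _ hz, mul_add, hξ]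
    ring
  have key := weierstrass_mul_eq_fibre hξ hη
  rw [h, sub_self, mul_zero, mul_eq_zero, sub_eq_zero] at key
  exact key.resolve_left (by positivity)

/-- The fibre D_α transforms into a Weierstrass-type equation. -/
theorem stmt_4 {K : Type*} [Field K] (h2 : (2 : K) ≠ 0) (t α x z : K)
    (ht : t ≠ 0) (hx : x ≠ 0) (hz : z ≠ 0)
    (h : α ^ 2 * z * (x + z * t) = x * (x + 1) * (z + 1)) :
    (((t * α ^ 2 / x) + t * α ^ 2) / z) ^ 2
      + (1 - α ^ 2) * (t * α ^ 2 / x) * (((t * α ^ 2 / x) + t * α ^ 2) / z)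
      + t * α ^ 2 * (((t * α ^ 2 / x) + t * α ^ 2) / z)
    = (t * α ^ 2 / x) ^ 3 + t * α ^ 2 * (t * α ^ 2 / x) ^ 2 :=
  stmt_4_general t α x z hx hz h
end

section
/- Let s² = -t and let b₁,…,b₅ = 0, 2+2s, 2-2s, -2+2s, -2-2s. Substitute ξ₇ = (ξ₉-2sξ₁₀-4t+4)/16 and ξ₈ = ξ₁₀/(8s) - 1/2. If t(t+1)η₂² = (ξ₇²+tξ₈²)(4ξ₇-4tξ₈-t-1)((ξ₇-2tξ₈-t)²+t(ξ₈+1)²), then 2¹⁸t(t+1)η₂² = ∏_{j=1}^{5}(ξ₉-bⱼξ₁₀+bⱼ²). -/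
/-- The equation of W_t in the new coordinates ξ₉, ξ₁₀. -/
theorem stmt_8 {K : Type*} [Field K] (h2 : (2 : K) ≠ 0) (t s ξ₉ ξ₁₀ η₂ : K)
    (hs : s ^ 2 = -t) (hs0 : s ≠ 0)
    (h : t * (t + 1) * η₂ ^ 2 =
      (((ξ₉ - 2 * s * ξ₁₀ - 4 * t + 4) / 16) ^ 2 + t * (ξ₁₀ / (8 * s) - 1 / 2) ^ 2) *
      (4 * ((ξ₉ - 2 * s * ξ₁₀ - 4 * t + 4) / 16)
        - 4 * t * (ξ₁₀ / (8 * s) - 1 / 2) - t - 1) *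
      ((((ξ₉ - 2 * s * ξ₁₀ - 4 * t + 4) / 16)
          - 2 * t * (ξ₁₀ / (8 * s) - 1 / 2) - t) ^ 2
        + t * ((ξ₁₀ / (8 * s) - 1 / 2) + 1) ^ 2)) :
    2 ^ 18 * t * (t + 1) * η₂ ^ 2 =
      (ξ₉ - 0 * ξ₁₀ + 0 ^ 2) *
      (ξ₉ - (2 + 2 * s) * ξ₁₀ + (2 + 2 * s) ^ 2) *
      (ξ₉ - (2 - 2 * s) * ξ₁₀ + (2 - 2 * s) ^ 2) *
      (ξ₉ - (-2 + 2 * s) * ξ₁₀ + (-2 + 2 * s) ^ 2) *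
      (ξ₉ - (-2 - 2 * s) * ξ₁₀ + (-2 - 2 * s) ^ 2) := by
  have ht : t = -s ^ 2 := by rw [hs]; ring
  subst ht
  have h16 : (16:K) ≠ 0 := by
    have := pow_ne_zero 4 h2; norm_num at this ⊢; exact this
  have h8 : (8:K) ≠ 0 := by
    have := pow_ne_zero 3 h2; norm_num at this ⊢; exact this
  field_simp [hs0, h16, h8] at h
  have hD : (2:K)^30 * s^7 ≠ 0 := mul_ne_zero (pow_ne_zero _ h2) (pow_ne_zero _ hs0)
  apply mul_left_cancel₀ hD
  linear_combination (2^8 * s^7) * h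
end

section
/- The functions η = y(x+r)/x² and ξ = -x/(2r) - r/(2x) are invariant under the involution φ(x,y) = (r²/x, r³y/x³), and if y² = x(x²-4x+4+4t)(x²+4x+4+4t) with x ≠ 0 then η² = -8r³(ξ-1)(ξ² - 1/(t+1)). -/
/-!
With `r² = 4 + 4t` the curve reads `y² = x (x² - 4x + r²) (x² + 4x + r²)`, and
`ξ = -(x² + r²) / (2rx)`. Hence `ξ - 1 = -(x + r)² / (2rx)`, while `ξ² - 4/r²` is a difference
of squares whose factors are exactly the two quadratic factors of the curve, divided by `4r²x²`.
Multiplying, `-8r³ (ξ - 1)(ξ² - 4/r²) = (x + r)² y² / x⁴ = η²`.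
-/

theorem four_ne_zero_of_two_ne_zero {K : Type*} [Field K] (h2 : (2 : K) ≠ 0) : (4 : K) ≠ 0 := by
  rw [show (4 : K) = 2 * 2 by norm_num]
  exact mul_ne_zero h2 h2

namespace QuotientCurve

variable {K : Type*} [Field K]

def xi (r x : K) : K := -x / (2 * r) - r / (2 * x)

def eta (r x y : K) : K := y * (x + r) / x ^ 2

theorem eta_involution {r x : K} (hr : r ≠ 0) (hx : x ≠ 0) (y : K) :
    eta r (r ^ 2 / x) (r ^ 3 * y / x ^ 3) = eta r x y := by
  unfold eta
  field_simp
  ring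

theorem xi_involution {r x : K} (hr : r ≠ 0) (hx : x ≠ 0) :
    xi r (r ^ 2 / x) = xi r x := by
  unfold xi
  field_simp
  ring

theorem xi_sub_one {r x : K} (h2 : (2 : K) ≠ 0) (hr : r ≠ 0) (hx : x ≠ 0) :
    xi r x - 1 = -(x + r) ^ 2 / (2 * r * x) := by
  unfold xi
  field_simp
  ring

theorem xi_sq_sub {r x : K} (h2 : (2 : K) ≠ 0) (hr : r ≠ 0) (hx : x ≠ 0) :
    xi r x ^ 2 - 4 / r ^ 2 =
      (x ^ 2 - 4 * x + r ^ 2) * (x ^ 2 + 4 * x + r ^ 2) / (4 * r ^ 2 * x ^ 2) := by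
  have h4 := four_ne_zero_of_two_ne_zero h2
  unfold xi
  field_simp
  ring

theorem eta_sq {r x y : K} (h2 : (2 : K) ≠ 0) (hr : r ≠ 0) (hx : x ≠ 0)
    (h : y ^ 2 = x * (x ^ 2 - 4 * x + r ^ 2) * (x ^ 2 + 4 * x + r ^ 2)) :
    eta r x y ^ 2 = -8 * r ^ 3 * (xi r x - 1) * (xi r x ^ 2 - 4 / r ^ 2) := by
  have h4 := four_ne_zero_of_two_ne_zero h2
  rw [xi_sub_one h2 hr hx, xi_sq_sub h2 hr hx, eta]
  field_simp
  linear_combination 8 * (x + r) ^ 2 * h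

end QuotientCurve

open QuotientCurve in
theorem stmt_13_general {K : Type*} [Field K] (h2 : (2 : K) ≠ 0) (t r x y : K)
    (hr : r ^ 2 = 4 + 4 * t) (hr0 : r ≠ 0) (hx : x ≠ 0)
    (h : y ^ 2 = x * (x ^ 2 - 4 * x + 4 + 4 * t) * (x ^ 2 + 4 * x + 4 + 4 * t)) :
    ((r ^ 3 * y / x ^ 3) * ((r ^ 2 / x) + r) / (r ^ 2 / x) ^ 2 =
        y * (x + r) / x ^ 2) ∧
    (-(r ^ 2 / x) / (2 * r) - r / (2 * (r ^ 2 / x)) =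
        -x / (2 * r) - r / (2 * x)) ∧
    ((y * (x + r) / x ^ 2) ^ 2 =
      -8 * r ^ 3 * ((-x / (2 * r) - r / (2 * x)) - 1) *
        ((-x / (2 * r) - r / (2 * x)) ^ 2 - 1 / (t + 1))) := by
  have inv_t : 1 / (t + 1) = 4 / r ^ 2 := by
    rw [hr, show (4 : K) + 4 * t = 4 * (t + 1) by ring, ← div_div,
      div_self (four_ne_zero_of_two_ne_zero h2)]
  have curve : y ^ 2 = x * (x ^ 2 - 4 * x + r ^ 2) * (x ^ 2 + 4 * x + r ^ 2) := by
    rw [h, hr]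
    ring
  refine ⟨eta_involution hr0 hx y, xi_involution hr0 hx, ?_⟩
  rw [inv_t]
  exact eta_sq h2 hr0 hx curve

/-- η = y(x+r)/x², ξ = -x/(2r) - r/(2x) are φ-invariant and satisfy the
    equation of the quotient elliptic curve F_t. -/
theorem stmt_13 {K : Type*} [Field K] (h2 : (2 : K) ≠ 0) (t r x y : K)
    (ht : t ≠ -1) (hr : r ^ 2 = 4 + 4 * t) (hr0 : r ≠ 0) (hx : x ≠ 0)
    (h : y ^ 2 = x * (x ^ 2 - 4 * x + 4 + 4 * t) * (x ^ 2 + 4 * x + 4 + 4 * t)) :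
    ((r ^ 3 * y / x ^ 3) * ((r ^ 2 / x) + r) / (r ^ 2 / x) ^ 2 =
        y * (x + r) / x ^ 2) ∧
    (-(r ^ 2 / x) / (2 * r) - r / (2 * (r ^ 2 / x)) =
        -x / (2 * r) - r / (2 * x)) ∧
    ((y * (x + r) / x ^ 2) ^ 2 =
      -8 * r ^ 3 * ((-x / (2 * r) - r / (2 * x)) - 1) *
        ((-x / (2 * r) - r / (2 * x)) ^ 2 - 1 / (t + 1))) :=
  stmt_13_general h2 t r x y hr hr0 hx h
end
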